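/- Let μ be a Borel probability measure on ℝ satisfying the basic assumptions and with finite first moment, let k ≥ 1, and suppose ν* attains inf_{ν ∈ 𝒫_k(ℝ)} W₁(μ,ν) and has support {y_1 < y_2 < … < y_k}. Define the percentile vector v_μ ∈ (0,1)ᵏ by (v_μ)_j := F_μ(y_j). Then W₁(μ, ν_{Q_{v_μ}}) = W₁(μ, ν*) = inf_{ν ∈ 𝒫_k(ℝ)} W₁(μ, ν); that is, v_μ is an optimal percentile vector. -/

import Mathlib

open MeasureTheory Filter Topology ENNReal

/-- The 1-Wasserstein distance between two measures on ℝ, defined as the infimum of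
transport costs over couplings. -/
noncomputable def W1 (α β : Measure ℝ) : ℝ :=
  sInf {c : ℝ | ∃ π : Measure (ℝ × ℝ), IsProbabilityMeasure π ∧
    π.map Prod.fst = α ∧ π.map Prod.snd = β ∧ c = ∫ p, |p.1 - p.2| ∂π}

/-- The ∞-Wasserstein distance between two measures on ℝ. -/
noncomputable def Winf (α β : Measure ℝ) : ℝ :=
  sInf {c : ℝ | ∃ π : Measure (ℝ × ℝ), IsProbabilityMeasure π ∧
    π.map Prod.fst = α ∧ π.map Prod.snd = β ∧
    c = essSup (fun p : ℝ × ℝ => |p.1 - p.2|) π}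

/-- `Pk k` : probability measures on ℝ supported on at most `k` points. -/
def Pk (k : ℕ) : Set (Measure ℝ) :=
  {ν | IsProbabilityMeasure ν ∧ ∃ s : Finset ℝ, s.card ≤ k ∧ ν ((↑s : Set ℝ)ᶜ) = 0}

/-- Wasserstein projection distance of `μ` onto `k`-point measures. -/
noncomputable def projDist (k : ℕ) (μ : Measure ℝ) : ℝ :=
  sInf {c : ℝ | ∃ ν ∈ Pk k, c = W1 μ ν}

/-- Empirical measure of a tuple of points. -/
noncomputable def empMeas {n : ℕ} (x : Fin n → ℝ) : Measure ℝ :=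
  ((n : ℝ≥0∞))⁻¹ • ∑ i : Fin n, Measure.dirac (x i)

/-- Social cost of facility placement `y` for agents at `x`. -/
noncomputable def SC {n k : ℕ} (x : Fin n → ℝ) (y : Fin k → ℝ) : ℝ :=
  (n : ℝ)⁻¹ * ∑ i : Fin n, ⨅ j : Fin k, |x i - y j|

/-- Optimal social cost for `k` facilities. -/
noncomputable def SCopt (k : ℕ) {n : ℕ} (x : Fin n → ℝ) : ℝ :=
  ⨅ y : Fin k → ℝ, SC x y

/-- Topological support of a measure on ℝ. -/
def msupport (ν : Measure ℝ) : Set ℝ := {t : ℝ | ∀ U ∈ nhds t, ν U ≠ 0}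

/-- Cumulative distribution function of a measure on ℝ. -/
noncomputable def mcdf (μ : Measure ℝ) (t : ℝ) : ℝ := (μ (Set.Iic t)).toReal

/-- Quantile (generalized inverse c.d.f.) of a measure on ℝ. -/
noncomputable def mquantile (μ : Measure ℝ) (v : ℝ) : ℝ := sInf {t : ℝ | v ≤ mcdf μ t}

/-- Basic assumptions: `μ` is an absolutely continuous probability measure with density `ρ`,
supported on a (closed) interval `S`, with `ρ` positive on the interior of `S`, vanishing
outside `S`, and differentiable on `S`. -/
def BasicAssumptions (μ : Measure ℝ) : Prop :=
  IsProbabilityMeasure μ ∧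
  ∃ (ρ : ℝ → ℝ) (S : Set ℝ),
    μ = volume.withDensity (fun x => ENNReal.ofReal (ρ x)) ∧
    IsClosed S ∧ S.OrdConnected ∧ μ Sᶜ = 0 ∧
    (∀ x ∈ interior S, 0 < ρ x) ∧ (∀ x ∉ S, ρ x = 0) ∧
    DifferentiableOn ℝ ρ S

/-- The percentile mechanism: facility `j` is placed at the `(⌊(n-1)vⱼ⌋+1)`-th smallest
coordinate of `x`. -/
noncomputable def percentileMech {k : ℕ} (v : Fin k → ℝ) {n : ℕ} (x : Fin n → ℝ) :
    Fin k → ℝ :=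
  fun j =>
    if h : 0 < n then
      x (Tuple.sort x ⟨min ⌊((n : ℝ) - 1) * v j⌋₊ (n - 1),
        Nat.lt_of_le_of_lt (min_le_right _ _) (by omega)⟩)
    else 0

/-- Social cost of the percentile mechanism with percentile vector `v`. -/
noncomputable def SCv {k : ℕ} (v : Fin k → ℝ) {n : ℕ} (x : Fin n → ℝ) : ℝ :=
  SC x (percentileMech v x)

/-- Cumulative masses of the Voronoi cells of the points `y 0 < y 1 < ⋯ < y (k-1)`:
`cellBd μ y j = F_μ(z_j)` where `z_j = (y (j-1) + y j)/2` for `1 ≤ j ≤ k-1` (1-based),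
with the conventions `F_μ(z_0) = 0` and `F_μ(z_k) = 1`. -/
noncomputable def cellBd (μ : Measure ℝ) {k : ℕ} (y : Fin k → ℝ) (j : ℕ) : ℝ :=
  if h0 : j = 0 then 0
  else if hk : k ≤ j then 1
  else mcdf μ ((y ⟨j - 1, by omega⟩ + y ⟨j, by omega⟩) / 2)

/-- The measure `ν_{Q_v}`: atoms at the quantiles `F_μ^{[-1]}(vⱼ)` weighted by the masses of
their Voronoi cells. -/
noncomputable def nuQ (μ : Measure ℝ) {k : ℕ} (v : Fin k → ℝ) : Measure ℝ :=
  ∑ i : Fin k,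
    ENNReal.ofReal (cellBd μ (fun j => mquantile μ (v j)) ((i : ℕ) + 1) -
        cellBd μ (fun j => mquantile μ (v j)) (i : ℕ)) •
      Measure.dirac (mquantile μ (v i))


section Helpers

/-- distance from `x` to the finite set of points `t`. -/
noncomputable def dmin {k : ℕ} (t : Fin k → ℝ) (x : ℝ) : ℝ := ⨅ j, |x - t j|

lemma dmin_bdd {k : ℕ} (t : Fin k → ℝ) (x : ℝ) :
    BddBelow (Set.range fun j => |x - t j|) :=
  ⟨0, by rintro _ ⟨j, rfl⟩; positivity⟩

lemma dmin_le {k : ℕ} (t : Fin k → ℝ) (x : ℝ) (j : Fin k) : dmin t x ≤ |x - t j| :=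
  ciInf_le (dmin_bdd t x) j

lemma dmin_nonneg {k : ℕ} (hk : 0 < k) (t : Fin k → ℝ) (x : ℝ) : 0 ≤ dmin t x := by
  haveI : Nonempty (Fin k) := ⟨⟨0, hk⟩⟩
  exact le_ciInf fun j => abs_nonneg _

lemma le_dmin {k : ℕ} (hk : 0 < k) {t : Fin k → ℝ} {x c : ℝ}
    (h : ∀ j, c ≤ |x - t j|) : c ≤ dmin t x := by
  haveI : Nonempty (Fin k) := ⟨⟨0, hk⟩⟩
  exact le_ciInf h

lemma dmin_exists {k : ℕ} (hk : 0 < k) (t : Fin k → ℝ) (x : ℝ) :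
    ∃ j, dmin t x = |x - t j| ∧ ∀ i, |x - t j| ≤ |x - t i| := by
  obtain ⟨j, -, hj⟩ := Finset.exists_min_image Finset.univ (fun j => |x - t j|)
    ⟨⟨0, hk⟩, Finset.mem_univ _⟩
  exact ⟨j, le_antisymm (dmin_le t x j)
    (le_dmin hk fun i => hj i (Finset.mem_univ i)), fun i => hj i (Finset.mem_univ i)⟩

lemma myabs_sub (a b : ℝ) : |a - b| ≤ |a| + |b| := by
  calc |a - b| ≤ |a| + |(-b)| := by rw [sub_eq_add_neg]; exact abs_add_le _ _
  _ = |a| + |b| := by rw [abs_neg]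

lemma dmin_lip {k : ℕ} (hk : 0 < k) (t : Fin k → ℝ) (x x' : ℝ) :
    dmin t x - dmin t x' ≤ |x - x'| := by
  have h : dmin t x - |x - x'| ≤ dmin t x' := by
    apply le_dmin hk
    intro j
    have h1 := dmin_le t x j
    have h2 : |x - t j| ≤ |x' - t j| + |x - x'| := by
      calc |x - t j| = |(x' - t j) + (x - x')| := by ring_nf
      _ ≤ |x' - t j| + |x - x'| := abs_add_le _ _
    linarith
  linarith

lemma dmin_continuous {k : ℕ} (hk : 0 < k) (t : Fin k → ℝ) : Continuous (dmin t) := by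
  have h : LipschitzWith 1 (dmin t) := by
    apply LipschitzWith.of_dist_le_mul
    intro x x'
    rw [Real.dist_eq, Real.dist_eq, NNReal.coe_one, one_mul, abs_sub_le_iff]
    exact ⟨dmin_lip hk t x x', by
      have := dmin_lip hk t x' x
      rwa [abs_sub_comm] at this⟩
  exact h.continuous

lemma dmin_integrable {μ : Measure ℝ} [IsProbabilityMeasure μ]
    (hint : Integrable (fun x : ℝ => |x|) μ) {k : ℕ} (hk : 0 < k) (t : Fin k → ℝ) :
    Integrable (dmin t) μ := by
  apply Integrable.mono' (hint.add (integrable_const |t ⟨0, hk⟩|))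
    ((dmin_continuous hk t).aestronglyMeasurable)
  filter_upwards with x
  rw [Real.norm_eq_abs, abs_of_nonneg (dmin_nonneg hk t x)]
  exact (dmin_le t x ⟨0, hk⟩).trans (myabs_sub _ _)

/-! ### W1 basics -/

lemma W1_bddBelow (α β : Measure ℝ) :
    BddBelow {c : ℝ | ∃ π : Measure (ℝ × ℝ), IsProbabilityMeasure π ∧
      π.map Prod.fst = α ∧ π.map Prod.snd = β ∧ c = ∫ p, |p.1 - p.2| ∂π} :=
  ⟨0, by rintro c ⟨π, hπ, -, -, rfl⟩; exact integral_nonneg fun p => abs_nonneg _⟩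

lemma W1_nonneg (α β : Measure ℝ) : 0 ≤ W1 α β :=
  Real.sInf_nonneg (by rintro c ⟨π, hπ, -, -, rfl⟩; exact integral_nonneg fun p => abs_nonneg _)

lemma W1_le_coupling {α β : Measure ℝ} {π : Measure (ℝ × ℝ)} (hπ : IsProbabilityMeasure π)
    (h1 : π.map Prod.fst = α) (h2 : π.map Prod.snd = β) :
    W1 α β ≤ ∫ p, |p.1 - p.2| ∂π :=
  csInf_le (W1_bddBelow α β) ⟨π, hπ, h1, h2, rfl⟩

lemma W1_set_nonempty (α β : Measure ℝ) [IsProbabilityMeasure α] [IsProbabilityMeasure β] :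
    {c : ℝ | ∃ π : Measure (ℝ × ℝ), IsProbabilityMeasure π ∧
      π.map Prod.fst = α ∧ π.map Prod.snd = β ∧ c = ∫ p, |p.1 - p.2| ∂π}.Nonempty := by
  refine ⟨_, α.prod β, by infer_instance, ?_, ?_, rfl⟩
  · rw [Measure.map_fst_prod]; simp
  · rw [Measure.map_snd_prod]; simp

lemma projDist_le {k : ℕ} {μ ν : Measure ℝ} (hν : ν ∈ Pk k) : projDist k μ ≤ W1 μ ν :=
  csInf_le ⟨0, by rintro c ⟨ν', hν', rfl⟩; exact W1_nonneg _ _⟩ ⟨ν, hν, rfl⟩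

/-- Lower bound: for `ν` supported on the range of `t`,
`∫ dmin t dμ ≤ W1 μ ν`. -/
lemma integral_dmin_le_W1 {μ ν : Measure ℝ} [IsProbabilityMeasure μ] [IsProbabilityMeasure ν]
    (hint : Integrable (fun x : ℝ => |x|) μ) {k : ℕ} (hk : 0 < k) (t : Fin k → ℝ)
    (hν : ν (Set.range t)ᶜ = 0) : ∫ x, dmin t x ∂μ ≤ W1 μ ν := by
  apply le_csInf (W1_set_nonempty μ ν)
  rintro c ⟨π, hπ, hfst, hsnd, rfl⟩
  haveI := hπ
  have hMne : (Finset.univ : Finset (Fin k)).Nonempty := ⟨⟨0, hk⟩, Finset.mem_univ _⟩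
  set M := Finset.univ.sup' hMne (fun j => |t j|) with hM
  have hMle : ∀ j, |t j| ≤ M := fun j => Finset.le_sup' (fun j => |t j|) (Finset.mem_univ j)
  have h2null : π {p : ℝ × ℝ | ¬ p.2 ∈ Set.range t} = 0 := by
    have heq : {p : ℝ × ℝ | ¬ p.2 ∈ Set.range t} = Prod.snd ⁻¹' (Set.range t)ᶜ := rfl
    rw [heq, ← Measure.map_apply measurable_snd
      ((Set.finite_range t).measurableSet.compl), hsnd]
    exact hν
  have hae : ∀ᵐ p ∂π, p.2 ∈ Set.range t := by
    rw [ae_iff]; exact h2null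
  have h1 : Integrable (fun p : ℝ × ℝ => |p.1|) π := by
    have h := hint
    rw [← hfst] at h
    exact (integrable_map_measure continuous_abs.aestronglyMeasurable
      measurable_fst.aemeasurable).mp h
  have h2 : Integrable (fun p : ℝ × ℝ => |p.2|) π := by
    apply Integrable.mono' (integrable_const M)
      (continuous_abs.comp continuous_snd).aestronglyMeasurable
    filter_upwards [hae] with p hp
    simp only [Function.comp_apply, Real.norm_eq_abs, abs_abs]
    obtain ⟨j, hj⟩ := hp
    rw [← hj]; exact hMle j
  have hcost : Integrable (fun p : ℝ × ℝ => |p.1 - p.2|) π := by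
    apply Integrable.mono' (h1.add h2)
      (continuous_abs.comp (continuous_fst.sub continuous_snd)).aestronglyMeasurable
    filter_upwards with p
    simp only [Function.comp_apply, Real.norm_eq_abs, abs_abs]
    exact myabs_sub _ _
  have hdint : Integrable (fun p : ℝ × ℝ => dmin t p.1) π := by
    apply Integrable.mono' (h1.add (integrable_const |t ⟨0, hk⟩|))
      (((dmin_continuous hk t).comp continuous_fst).aestronglyMeasurable)
    filter_upwards with p
    simp only [Function.comp_apply, Real.norm_eq_abs, Pi.add_apply]
    rw [abs_of_nonneg (dmin_nonneg hk t _)]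
    exact (dmin_le t _ ⟨0, hk⟩).trans (myabs_sub _ _)
  have key : ∫ p, dmin t p.1 ∂π ≤ ∫ p, |p.1 - p.2| ∂π := by
    apply integral_mono_ae hdint hcost
    filter_upwards [hae] with p hp
    obtain ⟨j, hj⟩ := hp
    calc dmin t p.1 ≤ |p.1 - t j| := dmin_le _ _ _
    _ = |p.1 - p.2| := by rw [hj]
  calc ∫ x, dmin t x ∂μ = ∫ p, dmin t p.1 ∂π := by
        rw [← hfst, integral_map measurable_fst.aemeasurable
          ((dmin_continuous hk t).aestronglyMeasurable)]
  _ ≤ _ := key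

end Helpers

section NearMap

variable {k : ℕ}

/-- `PP q x j` : the midpoint between atoms `j-1` and `j` lies strictly left of `x`
(vacuously true for `j = 0`). -/
def PP (q : Fin k → ℝ) (x : ℝ) (j : Fin k) : Prop :=
  if _ : (j : ℕ) = 0 then True
  else q ⟨(j : ℕ) - 1, lt_of_le_of_lt (Nat.pred_le _) j.2⟩ + q j < 2 * x

noncomputable instance (q : Fin k → ℝ) (x : ℝ) : DecidablePred (PP q x) := fun _ => Classical.propDecidable _

lemma PP_elim {q : Fin k → ℝ} {x : ℝ} {j : Fin k} (h0 : ¬ (j : ℕ) = 0) (h : PP q x j) :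
    q ⟨(j : ℕ) - 1, lt_of_le_of_lt (Nat.pred_le _) j.2⟩ + q j < 2 * x := by
  unfold PP at h; rwa [dif_neg h0] at h

lemma PP_intro {q : Fin k → ℝ} {x : ℝ} {j : Fin k} (h0 : ¬ (j : ℕ) = 0)
    (h : q ⟨(j : ℕ) - 1, lt_of_le_of_lt (Nat.pred_le _) j.2⟩ + q j < 2 * x) : PP q x j := by
  unfold PP; rwa [dif_neg h0]

lemma PP_zero (hk : 0 < k) (q : Fin k → ℝ) (x : ℝ) : PP q x ⟨0, hk⟩ := by
  simp [PP]

lemma PP_mono {q : Fin k → ℝ} (hq : Monotone q) {x : ℝ} {i j : Fin k}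
    (hij : i ≤ j) (h : PP q x j) : PP q x i := by
  have hij' : (i : ℕ) ≤ (j : ℕ) := hij
  by_cases h0 : (i : ℕ) = 0
  · unfold PP; rw [dif_pos h0]; trivial
  · have hj0 : ¬ (j : ℕ) = 0 := by omega
    have h' := PP_elim hj0 h
    apply PP_intro h0
    have e1 : q ⟨(i : ℕ) - 1, lt_of_le_of_lt (Nat.pred_le _) i.2⟩
        ≤ q ⟨(j : ℕ) - 1, lt_of_le_of_lt (Nat.pred_le _) j.2⟩ := hq (by simp [Fin.le_def]; omega)
    have e2 : q i ≤ q j := hq hij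
    linarith

/-- index of the Voronoi cell containing `x`. -/
noncomputable def nearIdx (q : Fin k → ℝ) (hk : 0 < k) (x : ℝ) : Fin k :=
  (Finset.univ.filter (PP q x)).max'
    ⟨⟨0, hk⟩, Finset.mem_filter.mpr ⟨Finset.mem_univ _, PP_zero hk q x⟩⟩

lemma nearIdx_mem (q : Fin k → ℝ) (hk : 0 < k) (x : ℝ) : PP q x (nearIdx q hk x) := by
  have h := Finset.max'_mem (Finset.univ.filter (PP q x))
    ⟨⟨0, hk⟩, Finset.mem_filter.mpr ⟨Finset.mem_univ _, PP_zero hk q x⟩⟩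
  exact (Finset.mem_filter.mp h).2

lemma le_nearIdx {q : Fin k → ℝ} (hk : 0 < k) {x : ℝ} {j : Fin k} (h : PP q x j) :
    j ≤ nearIdx q hk x :=
  Finset.le_max' _ j (Finset.mem_filter.mpr ⟨Finset.mem_univ _, h⟩)

lemma nearIdx_le {q : Fin k → ℝ} (hk : 0 < k) {x : ℝ} {i : Fin k}
    (h : ∀ j, PP q x j → j ≤ i) : nearIdx q hk x ≤ i :=
  Finset.max'_le _ _ _ (fun j hj => h j (Finset.mem_filter.mp hj).2)

lemma abs_near_r {u v x : ℝ} (huv : u ≤ v) (h : u + v ≤ 2 * x) : |x - v| ≤ |x - u| := by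
  rw [abs_of_nonneg (by linarith : (0 : ℝ) ≤ x - u), abs_le]
  constructor <;> linarith

lemma abs_near_l {u v x : ℝ} (huv : u ≤ v) (h : 2 * x ≤ u + v) : |x - u| ≤ |x - v| := by
  rw [abs_of_nonpos (by linarith : x - v ≤ 0), abs_le]
  constructor <;> linarith

lemma nearIdx_nearest {q : Fin k → ℝ} (hq : Monotone q) (hk : 0 < k) (x : ℝ) (j : Fin k) :
    |x - q (nearIdx q hk x)| ≤ |x - q j| := by
  set i := nearIdx q hk x with hi
  rcases lt_trichotomy (j : ℕ) (i : ℕ) with h | h | h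
  · have hPP := nearIdx_mem q hk x
    rw [← hi] at hPP
    have hi0 : ¬ (i : ℕ) = 0 := by omega
    unfold PP at hPP
    rw [dif_neg hi0] at hPP
    have h1 : q j ≤ q ⟨(i : ℕ) - 1, lt_of_le_of_lt (Nat.pred_le _) i.2⟩ :=
      hq (by simp [Fin.le_def]; omega)
    exact abs_near_r (hq (le_of_lt (by exact_mod_cast h : j < i))) (by linarith)
  · have : j = i := Fin.ext h
    rw [this]
  · have hi1lt : (i : ℕ) + 1 < k := lt_of_le_of_lt (by omega : (i : ℕ) + 1 ≤ (j : ℕ)) j.2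
    set i1 : Fin k := ⟨(i : ℕ) + 1, hi1lt⟩ with hi1
    have hnot : ¬ PP q x i1 := by
      intro hPP
      have := le_nearIdx hk hPP
      rw [← hi] at this
      have : (i : ℕ) + 1 ≤ (i : ℕ) := this
      omega
    have hnot2 : ¬ (q ⟨(i1 : ℕ) - 1, by omega⟩ + q i1 < 2 * x) :=
      fun hcon => hnot (PP_intro (by simp [hi1]) hcon)
    push_neg at hnot2
    have he : (⟨(i1 : ℕ) - 1, by omega⟩ : Fin k) = i := Fin.ext (by simp [hi1])
    rw [he] at hnot2
    have hnot := hnot2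
    have h2 : q i1 ≤ q j := hq (by simp [Fin.le_def, hi1]; omega)
    exact abs_near_l (hq (le_of_lt (by exact_mod_cast h : i < j))) (by linarith)

/-- nearest-atom map. -/
noncomputable def nearPt (q : Fin k → ℝ) (hk : 0 < k) (x : ℝ) : ℝ := q (nearIdx q hk x)

lemma abs_nearPt {q : Fin k → ℝ} (hq : Monotone q) (hk : 0 < k) (x : ℝ) :
    |x - nearPt q hk x| = dmin q x :=
  le_antisymm (le_dmin hk (nearIdx_nearest hq hk x)) (dmin_le q x _)

lemma measurableSet_PP (q : Fin k → ℝ) (j : Fin k) : MeasurableSet {x | PP q x j} := by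
  unfold PP
  split_ifs with h0
  · simp
  · exact measurableSet_lt measurable_const (measurable_id.const_mul 2)

lemma nearIdx_fiber (q : Fin k → ℝ) (hk : 0 < k) (j : Fin k) :
    {x | nearIdx q hk x = j} =
      {x | PP q x j} ∩ ⋂ j' : Fin k, {x | PP q x j' → j' ≤ j} := by
  ext x
  simp only [Set.mem_inter_iff, Set.mem_iInter, Set.mem_setOf_eq]
  constructor
  · rintro rfl
    exact ⟨nearIdx_mem q hk x, fun j' h => le_nearIdx hk h⟩
  · rintro ⟨h1, h2⟩
    exact le_antisymm (nearIdx_le hk h2) (le_nearIdx hk h1)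

lemma measurable_nearIdx (q : Fin k → ℝ) (hk : 0 < k) : Measurable (nearIdx q hk) := by
  apply measurable_to_countable'
  intro j
  have : nearIdx q hk ⁻¹' {j} = {x | nearIdx q hk x = j} := by ext x; simp
  rw [this, nearIdx_fiber]
  apply (measurableSet_PP q j).inter
  apply MeasurableSet.iInter
  intro j'
  by_cases hj' : j' ≤ j
  · have : {x : ℝ | PP q x j' → j' ≤ j} = Set.univ := by
      ext x; simp [hj']
    rw [this]; exact MeasurableSet.univ
  · have : {x : ℝ | PP q x j' → j' ≤ j} = {x | PP q x j'}ᶜ := by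
      ext x; simp [hj']
    rw [this]; exact (measurableSet_PP q j').compl

lemma measurable_nearPt (q : Fin k → ℝ) (hk : 0 < k) : Measurable (nearPt q hk) :=
  (measurable_of_countable q).comp (measurable_nearIdx q hk)

end NearMap

section Cdf

lemma mcdf_nonneg (μ : Measure ℝ) (t : ℝ) : 0 ≤ mcdf μ t := ENNReal.toReal_nonneg

lemma mcdf_mono (μ : Measure ℝ) [IsFiniteMeasure μ] : Monotone (mcdf μ) := fun a b h =>
  ENNReal.toReal_mono (measure_ne_top _ _) (measure_mono (Set.Iic_subset_Iic.mpr h))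

lemma meas_Iic (μ : Measure ℝ) [IsFiniteMeasure μ] (t : ℝ) :
    μ (Set.Iic t) = ENNReal.ofReal (mcdf μ t) :=
  (ENNReal.ofReal_toReal (measure_ne_top _ _)).symm

lemma meas_Ioc (μ : Measure ℝ) [IsFiniteMeasure μ] (a b : ℝ) :
    μ (Set.Ioc a b) = ENNReal.ofReal (mcdf μ b - mcdf μ a) := by
  rcases le_or_gt a b with h | h
  · rw [← (show Set.Iic b \ Set.Iic a = Set.Ioc a b by ext x; simp [and_comm]),
      measure_diff (Set.Iic_subset_Iic.mpr h) measurableSet_Iic.nullMeasurableSet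
        (measure_ne_top μ _)]
    have hle : μ (Set.Iic a) ≤ μ (Set.Iic b) := measure_mono (Set.Iic_subset_Iic.mpr h)
    have h1 := ENNReal.toReal_sub_of_le hle (measure_ne_top μ _)
    unfold mcdf
    rw [← h1, ENNReal.ofReal_toReal]
    exact ne_top_of_le_ne_top (measure_ne_top μ _) tsub_le_self
  · rw [Set.Ioc_eq_empty (by exact not_lt.mpr h.le : ¬ a < b), measure_empty]
    symm
    rw [ENNReal.ofReal_eq_zero, sub_nonpos]
    exact mcdf_mono μ h.le

lemma meas_Ioi (μ : Measure ℝ) [IsProbabilityMeasure μ] (t : ℝ) :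
    μ (Set.Ioi t) = ENNReal.ofReal (1 - mcdf μ t) := by
  have h : Set.Ioi t = (Set.Iic t)ᶜ := by ext x; simp
  rw [h, measure_compl measurableSet_Iic (measure_ne_top μ _), measure_univ, meas_Iic,
    ENNReal.ofReal_sub _ (mcdf_nonneg μ t), ENNReal.ofReal_one]

end Cdf

section Fiber

variable {k : ℕ}

lemma nearIdx_fiber_eq {q : Fin k → ℝ} (hq : Monotone q) (hk : 0 < k) (j : Fin k) :
    {x | nearIdx q hk x = j} =
      (if _ : (j : ℕ) = 0 then Set.univ
        else Set.Ioi ((q ⟨(j : ℕ) - 1, lt_of_le_of_lt (Nat.pred_le _) j.2⟩ + q j) / 2)) ∩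
      (if h1 : (j : ℕ) + 1 = k then Set.univ
        else Set.Iic ((q j + q ⟨(j : ℕ) + 1, lt_of_le_of_ne j.2 (fun hc => h1 hc)⟩) / 2)) := by
  ext x
  simp only [Set.mem_inter_iff, Set.mem_setOf_eq]
  constructor
  · rintro rfl
    constructor
    · split_ifs with h0
      · trivial
      · have h := PP_elim h0 (nearIdx_mem q hk x)
        simp only [Set.mem_Ioi]
        linarith
    · split_ifs with h1
      · trivial
      · set j := nearIdx q hk x
        set j1 : Fin k := ⟨(j : ℕ) + 1, lt_of_le_of_ne j.2 (fun hc => h1 hc)⟩ with hj1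
        have hnot : ¬ PP q x j1 := by
          intro hPP
          have hle := le_nearIdx hk hPP
          have : (j : ℕ) + 1 ≤ (j : ℕ) := hle
          omega
        have hnot2 : ¬ (q ⟨(j1 : ℕ) - 1, by omega⟩ + q j1 < 2 * x) :=
          fun hcon => hnot (PP_intro (by simp [hj1]) hcon)
        push_neg at hnot2
        have he : (⟨(j1 : ℕ) - 1, by omega⟩ : Fin k) = j := Fin.ext (by simp [hj1])
        rw [he] at hnot2
        simp only [Set.mem_Iic]
        linarith
  · rintro ⟨h1, h2⟩
    have hPPj : PP q x j := by
      by_cases h0 : (j : ℕ) = 0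
      · unfold PP; rw [dif_pos h0]; trivial
      · apply PP_intro h0
        rw [dif_neg h0] at h1
        simp only [Set.mem_Ioi] at h1
        linarith
    apply le_antisymm _ (le_nearIdx hk hPPj)
    apply nearIdx_le hk
    intro j' hj'
    by_contra hcon
    push_neg at hcon
    have hj'j : (j : ℕ) < (j' : ℕ) := hcon
    have hk1 : ¬ ((j : ℕ) + 1 = k) := by omega
    rw [dif_neg hk1] at h2
    simp only [Set.mem_Iic] at h2
    set j1 : Fin k := ⟨(j : ℕ) + 1, lt_of_le_of_ne j.2 (fun hc => hk1 hc)⟩ with hj1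
    have hPPj1 : PP q x j1 := PP_mono hq (by simp [Fin.le_def, hj1]; omega) hj'
    have h3 := PP_elim (by simp [hj1]) hPPj1
    have he : (⟨(j1 : ℕ) - 1, by omega⟩ : Fin k) = j := Fin.ext (by simp [hj1])
    rw [he] at h3
    linarith

lemma meas_fiber {μ : Measure ℝ} [IsProbabilityMeasure μ] {q : Fin k → ℝ}
    (hq : Monotone q) (hk : 0 < k) (j : Fin k) :
    μ {x | nearIdx q hk x = j} =
      ENNReal.ofReal (cellBd μ q ((j : ℕ) + 1) - cellBd μ q (j : ℕ)) := by
  have e1 : ∀ h, q (⟨(j : ℕ) + 1 - 1, h⟩ : Fin k) = q j :=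
    fun h => congrArg q (Fin.ext (by simp))
  rw [nearIdx_fiber_eq hq hk j]
  by_cases h0 : (j : ℕ) = 0 <;> by_cases h1 : (j : ℕ) + 1 = k
  · rw [dif_pos h0, dif_pos h1, Set.univ_inter, measure_univ]
    unfold cellBd
    rw [dif_neg (by omega : ¬ (j : ℕ) + 1 = 0), dif_pos (by omega : k ≤ (j : ℕ) + 1),
      dif_pos h0]
    norm_num
  · rw [dif_pos h0, dif_neg h1, Set.univ_inter, meas_Iic]
    unfold cellBd
    rw [dif_neg (by omega : ¬ (j : ℕ) + 1 = 0), dif_neg (by omega : ¬ k ≤ (j : ℕ) + 1),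
      dif_pos h0, sub_zero, e1]
  · rw [dif_neg h0, dif_pos h1, Set.inter_univ, meas_Ioi]
    unfold cellBd
    rw [dif_neg (by omega : ¬ (j : ℕ) + 1 = 0), dif_pos (by omega : k ≤ (j : ℕ) + 1),
      dif_neg h0, dif_neg (by omega : ¬ k ≤ (j : ℕ))]
  · rw [dif_neg h0, dif_neg h1, Set.Ioi_inter_Iic, meas_Ioc]
    unfold cellBd
    rw [dif_neg (by omega : ¬ (j : ℕ) + 1 = 0), dif_neg (by omega : ¬ k ≤ (j : ℕ) + 1),
      dif_neg h0, dif_neg (by omega : ¬ k ≤ (j : ℕ)), e1]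

end Fiber

section MapNear

variable {k : ℕ}

lemma map_nearPt_eq {μ : Measure ℝ} [IsProbabilityMeasure μ] {q : Fin k → ℝ}
    (hq : Monotone q) (hk : 0 < k) :
    μ.map (nearPt q hk) = ∑ j : Fin k,
      ENNReal.ofReal (cellBd μ q ((j : ℕ) + 1) - cellBd μ q (j : ℕ)) • Measure.dirac (q j) := by
  ext A hA
  rw [Measure.map_apply (measurable_nearPt q hk) hA]
  have hdecomp : nearPt q hk ⁻¹' A =
      ⋃ j : Fin k, ({x | nearIdx q hk x = j} ∩ nearPt q hk ⁻¹' A) := by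
    ext x
    simp only [Set.mem_iUnion, Set.mem_inter_iff, Set.mem_setOf_eq, Set.mem_preimage]
    constructor
    · intro hx
      exact ⟨nearIdx q hk x, rfl, hx⟩
    · rintro ⟨j, -, hx⟩
      exact hx
  have hfmeas : ∀ j : Fin k, MeasurableSet {x | nearIdx q hk x = j} := by
    intro j
    have h : {x | nearIdx q hk x = j} = nearIdx q hk ⁻¹' {j} := by ext x; simp
    rw [h]
    exact (measurable_nearIdx q hk) (measurableSet_singleton j)
  have hdisj : Pairwise (Function.onFun Disjoint
      fun j : Fin k => ({x | nearIdx q hk x = j} ∩ nearPt q hk ⁻¹' A)) := by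
    intro i j hij
    refine Set.disjoint_left.mpr ?_
    rintro x ⟨h1, -⟩ ⟨h2, -⟩
    exact hij (h1.symm.trans h2)
  rw [hdecomp, measure_iUnion hdisj
    (fun j => (hfmeas j).inter ((measurable_nearPt q hk) hA)), tsum_fintype,
    Measure.finset_sum_apply]
  apply Finset.sum_congr rfl
  intro j _
  rw [Measure.smul_apply, Measure.dirac_apply' _ hA, smul_eq_mul]
  by_cases hqj : q j ∈ A
  · have heq : {x | nearIdx q hk x = j} ∩ nearPt q hk ⁻¹' A = {x | nearIdx q hk x = j} := by
      apply Set.inter_eq_self_of_subset_left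
      intro x hx
      simp only [Set.mem_setOf_eq] at hx
      simp only [Set.mem_preimage]
      unfold nearPt
      rw [hx]
      exact hqj
    rw [heq, meas_fiber hq hk j, Set.indicator_of_mem hqj]
    simp
  · have heq : {x | nearIdx q hk x = j} ∩ nearPt q hk ⁻¹' A = ∅ := by
      ext x
      simp only [Set.mem_inter_iff, Set.mem_setOf_eq, Set.mem_preimage, Set.mem_empty_iff_false,
        iff_false, not_and]
      intro hx
      unfold nearPt
      rw [hx]
      exact hqj
    rw [heq, Set.indicator_of_notMem hqj]
    simp

/-- `nuQ` is the pushforward of `μ` under the nearest-quantile map. -/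
lemma nuQ_eq_map {μ : Measure ℝ} [IsProbabilityMeasure μ] {v : Fin k → ℝ} (hk : 0 < k)
    (hq : Monotone (fun j => mquantile μ (v j))) :
    nuQ μ v = μ.map (nearPt (fun j => mquantile μ (v j)) hk) := by
  rw [map_nearPt_eq hq hk]
  rfl

lemma map_nearPt_mem_Pk {μ : Measure ℝ} [IsProbabilityMeasure μ] (q : Fin k → ℝ) (hk : 0 < k) :
    μ.map (nearPt q hk) ∈ Pk k := by
  refine ⟨Measure.isProbabilityMeasure_map (measurable_nearPt q hk).aemeasurable,
    Finset.univ.image q, le_trans Finset.card_image_le (by simp), ?_⟩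
  rw [Measure.map_apply (measurable_nearPt q hk) (Finset.univ.image q).measurableSet.compl]
  convert measure_empty (μ := μ)
  · ext x
    simp only [Set.mem_preimage, Set.mem_compl_iff, Finset.coe_image, Set.mem_image,
      Finset.coe_univ, Set.mem_empty_iff_false, iff_false, not_not]
    exact ⟨nearIdx q hk x, Set.mem_univ _, rfl⟩

lemma W1_map_nearPt_le {μ : Measure ℝ} [IsProbabilityMeasure μ]
    {q : Fin k → ℝ} (hq : Monotone q) (hk : 0 < k) :
    W1 μ (μ.map (nearPt q hk)) ≤ ∫ x, dmin q x ∂μ := by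
  set T : ℝ → ℝ × ℝ := fun x => (x, nearPt q hk x) with hT
  have hTmeas : Measurable T := measurable_id.prodMk (measurable_nearPt q hk)
  have hfst : (μ.map T).map Prod.fst = μ := by
    rw [Measure.map_map measurable_fst hTmeas]
    have : Prod.fst ∘ T = id := rfl
    rw [this, Measure.map_id]
  have hsnd : (μ.map T).map Prod.snd = μ.map (nearPt q hk) := by
    rw [Measure.map_map measurable_snd hTmeas]
    rfl
  haveI : IsProbabilityMeasure (μ.map T) := Measure.isProbabilityMeasure_map hTmeas.aemeasurable
  refine le_trans (W1_le_coupling ‹_› hfst hsnd) (le_of_eq ?_)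
  have hmap := integral_map (φ := T) (μ := μ) hTmeas.aemeasurable
    (f := fun p : ℝ × ℝ => |p.1 - p.2|)
    ((continuous_fst.sub continuous_snd).abs).aestronglyMeasurable
  rw [hmap]
  apply integral_congr_ae
  filter_upwards with x
  exact abs_nearPt hq hk x

end MapNear

section Improve

lemma tendsto_Iic_zero {μ : Measure ℝ} [IsProbabilityMeasure μ] {a c : ℝ}
    (h0 : μ (Set.Iic a) = 0) (hc : 0 < c) :
    Tendsto (fun n : ℕ => μ (Set.Iic (a + c / ((n : ℝ) + 2)))) atTop (𝓝 0) := by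
  have h1 := tendsto_measure_iInter_atTop (μ := μ)
    (s := fun n : ℕ => Set.Iic (a + c / ((n : ℝ) + 2)))
    (fun n => measurableSet_Iic.nullMeasurableSet)
    (fun m n hmn => Set.Iic_subset_Iic.mpr (by
      have : c / ((n : ℝ) + 2) ≤ c / ((m : ℝ) + 2) := by
        apply div_le_div_of_nonneg_left hc.le (by positivity)
        exact_mod_cast by omega
      linarith))
    ⟨0, measure_ne_top μ _⟩
  have h2 : ⋂ n : ℕ, Set.Iic (a + c / ((n : ℝ) + 2)) = Set.Iic a := by
    ext x
    simp only [Set.mem_iInter, Set.mem_Iic]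
    constructor
    · intro h
      by_contra hx
      push_neg at hx
      obtain ⟨n, hn⟩ := exists_nat_gt (c / (x - a))
      have hxa : 0 < x - a := by linarith
      have hcn : c / ((n : ℝ) + 2) < x - a := by
        rw [div_lt_iff₀ (by positivity)]
        rw [div_lt_iff₀ hxa] at hn
        nlinarith [hxa]
      linarith [h n]
    · intro h n
      have : 0 < c / ((n : ℝ) + 2) := by positivity
      linarith
  rw [h2, h0] at h1
  exact h1

lemma improve {μ : Measure ℝ} [IsProbabilityMeasure μ]
    (hint : Integrable (fun x : ℝ => |x|) μ) {k : ℕ} (hk : 0 < k)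
    (y : Fin k → ℝ) (j0 : Fin k) {a c : ℝ} (hc : 0 < c)
    (h0 : μ (Set.Iic a) = 0) (hpos : μ (Set.Iic (a + c)) ≠ 0)
    (hle : ∀ i, i ≤ j0 → y i ≤ a) (hge : ∀ i, j0 < i → a + 2 * c ≤ y i) :
    ∃ s : ℝ, 0 < s ∧ s < c ∧
      ∫ x, dmin (Function.update y j0 (a + s)) x ∂μ < ∫ x, dmin y x ∂μ := by
  have hev := (tendsto_Iic_zero h0 hc).eventually_lt_const
    (show (0 : ℝ≥0∞) < μ (Set.Iic (a + c)) / 3 from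
      ENNReal.div_pos hpos (by norm_num))
  obtain ⟨n, hn⟩ := hev.exists
  set s := c / ((n : ℝ) + 2) with hs
  have hs0 : 0 < s := by positivity
  have hsc : s < c := by
    have h1 : (1 : ℝ) < (n : ℝ) + 2 := by
      have hcast : (0 : ℝ) ≤ (n : ℝ) := Nat.cast_nonneg n
      linarith
    exact div_lt_self hc h1
  refine ⟨s, hs0, hsc, ?_⟩
  set y' := Function.update y j0 (a + s) with hy'
  have hy'j0 : y' j0 = a + s := Function.update_self _ _ _
  have hy'ne : ∀ i, i ≠ j0 → y' i = y i := fun i hi => Function.update_of_ne hi _ _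
  have hyj0 : y j0 ≤ a := hle j0 le_rfl
  -- pointwise facts
  have hN : ∀ x, a + s ≤ x → dmin y' x ≤ dmin y x := by
    intro x hx
    obtain ⟨j, hj, hjmin⟩ := dmin_exists hk y x
    rw [hj]
    by_cases hjj : j = j0
    · calc dmin y' x ≤ |x - y' j0| := dmin_le _ _ _
      _ = x - (a + s) := by rw [hy'j0, abs_of_nonneg (by linarith)]
      _ ≤ x - y j0 := by linarith
      _ ≤ |x - y j0| := le_abs_self _
      _ = |x - y j| := by rw [hjj]
    · calc dmin y' x ≤ |x - y' j| := dmin_le _ _ _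
      _ = |x - y j| := by rw [hy'ne j hjj]
  have hg_lb : ∀ x, a < x → x ≤ a + c → x - a ≤ dmin y x := by
    intro x hx1 hx2
    apply le_dmin hk
    intro i
    rcases le_or_gt i j0 with hij | hij
    · have h := hle i hij
      calc x - a ≤ x - y i := by linarith
      _ ≤ |x - y i| := le_abs_self _
    · have h := hge i hij
      calc x - a ≤ y i - x := by linarith
      _ ≤ |x - y i| := by rw [abs_sub_comm]; exact le_abs_self _
  have hG : ∀ x, a + s < x → x ≤ a + c → dmin y' x + s ≤ dmin y x := by
    intro x h1 h2
    have hub : dmin y' x ≤ x - (a + s) := by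
      calc dmin y' x ≤ |x - y' j0| := dmin_le _ _ _
      _ = x - (a + s) := by rw [hy'j0, abs_of_nonneg (by linarith)]
    have hlb := hg_lb x (by linarith) h2
    linarith
  have hL : ∀ x, a < x → dmin y' x - dmin y x ≤ s := by
    intro x hx
    rcases le_or_gt (a + s) x with h | h
    · have h1 := hN x h
      linarith
    · have h1 : dmin y' x ≤ |x - (a + s)| := by
        rw [← hy'j0]; exact dmin_le _ _ _
      have h2 : |x - (a + s)| = (a + s) - x := by
        rw [abs_of_nonpos (by linarith)]; ring
      have h3 := dmin_nonneg hk y x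
      linarith
  have hint1 : Integrable (dmin y) μ := dmin_integrable hint hk y
  have hint2 : Integrable (dmin y') μ := dmin_integrable hint hk y'
  set φ : ℝ → ℝ := fun x =>
    Set.indicator (Set.Ioc (a + s) (a + c)) (fun _ => s) x -
      Set.indicator (Set.Ioc a (a + s)) (fun _ => s) x with hφ
  have hφ1 : Integrable (fun x => Set.indicator (Set.Ioc (a + s) (a + c)) (fun _ => s) x) μ :=
    (integrable_const s).indicator measurableSet_Ioc
  have hφ2 : Integrable (fun x => Set.indicator (Set.Ioc a (a + s)) (fun _ => s) x) μ :=
    (integrable_const s).indicator measurableSet_Ioc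
  have hφint : Integrable φ μ := hφ1.sub hφ2
  have hae : ∀ᵐ x ∂μ, a < x := by
    rw [ae_iff]
    have heq : {x : ℝ | ¬ a < x} = Set.Iic a := by ext x; simp
    rw [heq]
    exact h0
  have hmono : ∀ᵐ x ∂μ, φ x ≤ dmin y x - dmin y' x := by
    filter_upwards [hae] with x hx
    by_cases h1 : x ∈ Set.Ioc (a + s) (a + c)
    · have h2 : x ∉ Set.Ioc a (a + s) := by
        simp only [Set.mem_Ioc] at h1 ⊢
        intro hcon
        linarith [h1.1, hcon.2]
      rw [hφ]
      simp only [Set.indicator_of_mem h1, Set.indicator_of_notMem h2]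
      have := hG x h1.1 h1.2
      linarith
    · by_cases h2 : x ∈ Set.Ioc a (a + s)
      · rw [hφ]
        simp only [Set.indicator_of_notMem h1, Set.indicator_of_mem h2]
        have := hL x hx
        linarith
      · rw [hφ]
        simp only [Set.indicator_of_notMem h1, Set.indicator_of_notMem h2]
        have hx2 : a + s ≤ x := by
          simp only [Set.mem_Ioc, not_and, not_le] at h2
          by_contra hcon
          push_neg at hcon
          linarith [h2 hx]
        have := hN x hx2
        linarith
  have hφval : ∫ x, φ x ∂μ =
      s * (μ (Set.Ioc (a + s) (a + c))).toReal - s * (μ (Set.Ioc a (a + s))).toReal := by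
    rw [hφ, integral_sub hφ1 hφ2, integral_indicator_const, integral_indicator_const]
    · rw [smul_eq_mul, smul_eq_mul, mul_comm s, mul_comm s]; rfl
    · exact measurableSet_Ioc
    · exact measurableSet_Ioc
  have hkey : ∫ x, φ x ∂μ ≤ ∫ x, dmin y x ∂μ - ∫ x, dmin y' x ∂μ := by
    rw [← integral_sub hint1 hint2]
    exact integral_mono_ae hφint (hint1.sub hint2) hmono
  have harith : 0 < ∫ x, φ x ∂μ := by
    rw [hφval]
    set d := (μ (Set.Iic (a + c))).toReal with hd
    set b := (μ (Set.Iic (a + s))).toReal with hb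
    have hA : (μ (Set.Ioc (a + s) (a + c))).toReal = d - b := by
      rw [meas_Ioc, ENNReal.toReal_ofReal]
      · rfl
      · have hm := mcdf_mono μ (by linarith : a + s ≤ a + c)
        linarith
    have hB : (μ (Set.Ioc a (a + s))).toReal ≤ b := by
      apply ENNReal.toReal_mono (measure_ne_top μ _)
      exact measure_mono (fun x hx => hx.2)
    have hbd : b < d / 3 := by
      have h1 : μ (Set.Iic (a + s)) < μ (Set.Iic (a + c)) / 3 := hn
      have h2 := ENNReal.toReal_mono ?_ h1.le
      · rcases lt_or_eq_of_le h2 with h3 | h3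
        · rw [ENNReal.toReal_div] at h3
          simpa using h3
        · exfalso
          have h4 : μ (Set.Iic (a + s)) ≠ μ (Set.Iic (a + c)) / 3 := h1.ne
          apply h4
          apply (ENNReal.toReal_eq_toReal_iff' (measure_ne_top μ _) ?_).mp h3
          exact (ENNReal.div_lt_top (measure_ne_top μ _) (by norm_num)).ne
      · exact (ENNReal.div_lt_top (measure_ne_top μ _) (by norm_num)).ne
    have hd0 : 0 < d := ENNReal.toReal_pos hpos (measure_ne_top μ _)
    rw [hA]
    nlinarith [hB]
  linarith [hkey, harith]

end Improve

section Quantile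

lemma exists_mcdf_lt (μ : Measure ℝ) [IsProbabilityMeasure μ] {v : ℝ} (hv : 0 < v) :
    ∃ t0 : ℝ, mcdf μ t0 < v := by
  have h1 := tendsto_measure_iInter_atTop (μ := μ)
    (s := fun n : ℕ => Set.Iic (-(n : ℝ)))
    (fun n => measurableSet_Iic.nullMeasurableSet)
    (fun m n hmn => Set.Iic_subset_Iic.mpr (neg_le_neg (by exact_mod_cast hmn)))
    ⟨0, measure_ne_top μ _⟩
  have h2 : ⋂ n : ℕ, Set.Iic (-(n : ℝ)) = ∅ := by
    ext x
    simp only [Set.mem_iInter, Set.mem_Iic, Set.mem_empty_iff_false, iff_false, not_forall,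
      not_le]
    obtain ⟨n, hn⟩ := exists_nat_gt (-x)
    exact ⟨n, by linarith⟩
  rw [h2, measure_empty] at h1
  have h3 := h1.eventually_lt_const (show (0 : ℝ≥0∞) < ENNReal.ofReal v from
    ENNReal.ofReal_pos.mpr hv)
  obtain ⟨n, hn⟩ := h3.exists
  exact ⟨-(n : ℝ), ENNReal.toReal_lt_of_lt_ofReal hn⟩

lemma quantile_le_and_gap {μ : Measure ℝ} [IsProbabilityMeasure μ] {w : ℝ}
    (hw : μ (Set.Iic w) ≠ 0) :
    mquantile μ (mcdf μ w) ≤ w ∧ μ (Set.Ioc (mquantile μ (mcdf μ w)) w) = 0 := by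
  set v := mcdf μ w with hv
  have hv0 : 0 < v := ENNReal.toReal_pos hw (measure_ne_top μ _)
  obtain ⟨t0, ht0⟩ := exists_mcdf_lt μ hv0
  have hbdd : BddBelow {t : ℝ | v ≤ mcdf μ t} := by
    refine ⟨t0, fun t ht => ?_⟩
    by_contra hlt
    push_neg at hlt
    have := mcdf_mono μ hlt.le
    simp only [Set.mem_setOf_eq] at ht
    linarith
  have hne : w ∈ {t : ℝ | v ≤ mcdf μ t} := le_refl v
  have hq_le : mquantile μ v ≤ w := csInf_le hbdd hne
  set qq := mquantile μ v with hqq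
  have hFq : v ≤ mcdf μ qq := by
    have key : ∀ n : ℕ, ENNReal.ofReal v ≤ μ (Set.Iic (qq + 1 / ((n : ℝ) + 1))) := by
      intro n
      have hlt : qq < qq + 1 / ((n : ℝ) + 1) := by
        have : (0 : ℝ) < 1 / ((n : ℝ) + 1) := by positivity
        linarith
      obtain ⟨t, ht, htlt⟩ := exists_lt_of_csInf_lt ⟨w, hne⟩
        (show sInf {t : ℝ | v ≤ mcdf μ t} < qq + 1 / ((n : ℝ) + 1) from hlt)
      simp only [Set.mem_setOf_eq] at ht
      calc ENNReal.ofReal v ≤ ENNReal.ofReal (mcdf μ t) := ENNReal.ofReal_le_ofReal ht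
      _ = μ (Set.Iic t) := (meas_Iic μ t).symm
      _ ≤ μ (Set.Iic (qq + 1 / ((n : ℝ) + 1))) := measure_mono (Set.Iic_subset_Iic.mpr htlt.le)
    have h1 := tendsto_measure_iInter_atTop (μ := μ)
      (s := fun n : ℕ => Set.Iic (qq + 1 / ((n : ℝ) + 1)))
      (fun n => measurableSet_Iic.nullMeasurableSet)
      (fun m n hmn => Set.Iic_subset_Iic.mpr (by
        have : 1 / ((n : ℝ) + 1) ≤ 1 / ((m : ℝ) + 1) := by
          apply div_le_div_of_nonneg_left one_pos.le (by positivity)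
          exact_mod_cast by omega
        linarith))
      ⟨0, measure_ne_top μ _⟩
    have h2 : ⋂ n : ℕ, Set.Iic (qq + 1 / ((n : ℝ) + 1)) = Set.Iic qq := by
      ext x
      simp only [Set.mem_iInter, Set.mem_Iic]
      constructor
      · intro h
        by_contra hx
        push_neg at hx
        obtain ⟨n, hn⟩ := exists_nat_gt (1 / (x - qq))
        have hxq : 0 < x - qq := by linarith
        have hcn : 1 / ((n : ℝ) + 1) < x - qq := by
          rw [div_lt_iff₀ (by positivity)]
          rw [div_lt_iff₀ hxq] at hn
          nlinarith [hxq]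
        linarith [h n]
      · intro h n
        have : 0 < 1 / ((n : ℝ) + 1) := by positivity
        linarith
    rw [h2] at h1
    have h3 : ENNReal.ofReal v ≤ μ (Set.Iic qq) :=
      ge_of_tendsto h1 (Eventually.of_forall key)
    exact (ENNReal.ofReal_le_iff_le_toReal (measure_ne_top μ _)).mp h3
  refine ⟨hq_le, ?_⟩
  rw [meas_Ioc, ENNReal.ofReal_eq_zero, sub_nonpos]
  exact hFq

lemma quantile_mono {μ : Measure ℝ} [IsProbabilityMeasure μ] {w w' : ℝ}
    (hw : μ (Set.Iic w) ≠ 0) (hww' : w ≤ w') :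
    mquantile μ (mcdf μ w) ≤ mquantile μ (mcdf μ w') := by
  have hv0 : 0 < mcdf μ w := ENNReal.toReal_pos hw (measure_ne_top μ _)
  obtain ⟨t0, ht0⟩ := exists_mcdf_lt μ hv0
  have hbdd : BddBelow {t : ℝ | mcdf μ w ≤ mcdf μ t} := by
    refine ⟨t0, fun t ht => ?_⟩
    by_contra hlt
    push_neg at hlt
    have := mcdf_mono μ hlt.le
    simp only [Set.mem_setOf_eq] at ht
    linarith
  show mquantile μ (mcdf μ w) ≤ sInf {t : ℝ | mcdf μ w' ≤ mcdf μ t}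
  apply le_csInf ⟨w', show w' ∈ {t : ℝ | mcdf μ w' ≤ mcdf μ t} from Set.mem_setOf_eq ▸ le_refl _⟩
  intro t ht
  simp only [Set.mem_setOf_eq] at ht
  exact csInf_le hbdd (le_trans (mcdf_mono μ hww') ht)

end Quantile

/-- If `ν*` attains the Wasserstein projection distance and has support
`{y 0 < ⋯ < y (k-1)}`, then the percentile vector `vμ j = F_μ(y j)` is optimal:
`W₁(μ, ν_{Q_{vμ}}) = W₁(μ, ν*) = inf_{ν ∈ 𝒫_k} W₁(μ, ν)`. -/
theorem stmt8 (μ : Measure ℝ) (hμ : BasicAssumptions μ)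
    (hint : Integrable (fun x : ℝ => |x|) μ) {k : ℕ} (hk : 1 ≤ k)
    (νstar : Measure ℝ) (hνPk : νstar ∈ Pk k) (hopt : W1 μ νstar = projDist k μ)
    (y : Fin k → ℝ) (hy : StrictMono y) (hsupp : msupport νstar = Set.range y) :
    W1 μ (nuQ μ (fun j => mcdf μ (y j))) = W1 μ νstar ∧
    W1 μ νstar = projDist k μ := by
  obtain ⟨hprob, ρ, S, hμd, hSclosed, hSord, hScompl, hρpos, hρ0, hρdiff⟩ := hμ
  haveI := hprob
  haveI := hνPk.1
  have hk0 : 0 < k := hk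
  have hnull : ∀ A : Set ℝ, MeasurableSet A → volume A = 0 → μ A = 0 := by
    intro A hA hvol
    rw [hμd, withDensity_apply _ hA, Measure.restrict_eq_zero.mpr hvol, lintegral_zero_measure]
  have hsing : ∀ p : ℝ, μ {p} = 0 := fun p =>
    hnull _ (measurableSet_singleton p) Real.volume_singleton
  -- νstar is supported on the range of y
  have hνsupp : νstar ((Set.range y)ᶜ) = 0 := by
    obtain ⟨hp, s, hcard, hs0⟩ := hνPk
    have h1 : ∀ p : ℝ, p ∉ msupport νstar → νstar {p} = 0 := by
      intro p hp2
      simp only [msupport, Set.mem_setOf_eq, not_forall] at hp2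
      obtain ⟨U, hU, hU0⟩ := hp2
      exact measure_mono_null (Set.singleton_subset_iff.mpr (mem_of_mem_nhds hU))
        (not_not.mp hU0)
    have hsub : (Set.range y)ᶜ ⊆ ((s : Set ℝ))ᶜ ∪ ((s : Set ℝ) ∩ (Set.range y)ᶜ) := by
      intro x hx
      by_cases hxs : x ∈ (s : Set ℝ)
      · exact Or.inr ⟨hxs, hx⟩
      · exact Or.inl hxs
    apply measure_mono_null hsub
    apply measure_union_null hs0
    have heq : (s : Set ℝ) ∩ (Set.range y)ᶜ =
        ⋃ p ∈ (s : Set ℝ) ∩ (Set.range y)ᶜ, {p} := (Set.biUnion_of_singleton _).symm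
    rw [heq, measure_biUnion_null_iff ((s.finite_toSet.inter_of_left _).countable)]
    intro p hp3
    apply h1
    rw [hsupp]
    exact hp3.2
  -- STEP A : all cdf values at the atoms are positive
  have hstepA : ∀ j : Fin k, μ (Set.Iic (y j)) ≠ 0 := by
    by_contra hcon
    push_neg at hcon
    obtain ⟨jz, hjz⟩ := hcon
    set Tpos := {t : ℝ | μ (Set.Iic t) ≠ 0} with hTpos
    have hTne : Tpos.Nonempty := by
      by_contra hT
      rw [Set.not_nonempty_iff_eq_empty] at hT
      have hall : ∀ n : ℕ, μ (Set.Iic ((n : ℝ))) = 0 := by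
        intro n
        by_contra h
        exact (Set.eq_empty_iff_forall_notMem.mp hT (n : ℝ)) h
      have huniv : (Set.univ : Set ℝ) ⊆ ⋃ n : ℕ, Set.Iic ((n : ℝ)) := by
        intro x _
        obtain ⟨n, hn⟩ := exists_nat_ge x
        exact Set.mem_iUnion.mpr ⟨n, hn⟩
      have h0 : μ Set.univ = 0 :=
        measure_mono_null huniv (measure_iUnion_null hall)
      rw [measure_univ] at h0
      exact one_ne_zero h0
    have hbddT : BddBelow Tpos := by
      refine ⟨y jz, fun t ht => ?_⟩
      by_contra hlt
      push_neg at hlt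
      exact ht (measure_mono_null (Set.Iic_subset_Iic.mpr hlt.le) hjz)
    set a := sInf Tpos with ha
    have hIioa : μ (Set.Iio a) = 0 := by
      have hcover : Set.Iio a ⊆ ⋃ n : ℕ, Set.Iic (a - 1 / ((n : ℝ) + 1)) := by
        intro x hx
        simp only [Set.mem_Iio] at hx
        obtain ⟨n, hn⟩ := exists_nat_gt (1 / (a - x))
        have hax : 0 < a - x := by linarith
        have hcn : 1 / ((n : ℝ) + 1) < a - x := by
          rw [div_lt_iff₀ (by positivity)]
          rw [div_lt_iff₀ hax] at hn
          nlinarith [hax]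
        exact Set.mem_iUnion.mpr ⟨n, by simp only [Set.mem_Iic]; linarith⟩
      apply measure_mono_null hcover
      apply measure_iUnion_null
      intro n
      by_contra h
      have hmem : (a - 1 / ((n : ℝ) + 1)) ∈ Tpos := h
      have := csInf_le hbddT hmem
      have hpos' : (0 : ℝ) < 1 / ((n : ℝ) + 1) := by positivity
      rw [← ha] at this
      linarith
    have h0a : μ (Set.Iic a) = 0 := by
      rw [← Set.Iio_union_right]
      exact measure_union_null hIioa (hsing a)
    have hposa : ∀ t, a < t → μ (Set.Iic t) ≠ 0 := by
      intro t hat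
      obtain ⟨t', ht', htlt⟩ := exists_lt_of_csInf_lt hTne (show sInf Tpos < t from hat)
      intro hzero
      exact ht' (measure_mono_null (Set.Iic_subset_Iic.mpr htlt.le) hzero)
    set Z := Finset.univ.filter (fun i : Fin k => μ (Set.Iic (y i)) = 0) with hZ
    have hZne : Z.Nonempty := ⟨jz, Finset.mem_filter.mpr ⟨Finset.mem_univ _, hjz⟩⟩
    set j0 := Z.max' hZne with hj0
    have hj0mem : μ (Set.Iic (y j0)) = 0 := (Finset.mem_filter.mp (Z.max'_mem hZne)).2
    have hlej0 : ∀ i, i ≤ j0 → y i ≤ a := by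
      intro i hij
      have h1 : μ (Set.Iic (y i)) = 0 :=
        measure_mono_null (Set.Iic_subset_Iic.mpr (hy.monotone hij)) hj0mem
      apply le_csInf hTne
      intro t ht
      by_contra hlt
      push_neg at hlt
      exact ht (measure_mono_null (Set.Iic_subset_Iic.mpr hlt.le) h1)
    obtain ⟨c, hc, hgec, hposac⟩ :
        ∃ c : ℝ, 0 < c ∧ (∀ i, j0 < i → a + 2 * c ≤ y i) ∧ μ (Set.Iic (a + c)) ≠ 0 := by
      by_cases hlast : (j0 : ℕ) + 1 = k
      · refine ⟨1, one_pos, ?_, hposa _ (by linarith)⟩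
        intro i hi
        exfalso
        have h1 : (j0 : ℕ) < (i : ℕ) := hi
        have := i.2
        omega
      · have hi1lt : (j0 : ℕ) + 1 < k := lt_of_le_of_ne j0.2 (fun hc2 => hlast hc2)
        set i1 : Fin k := ⟨(j0 : ℕ) + 1, hi1lt⟩ with hi1
        have hi1pos : μ (Set.Iic (y i1)) ≠ 0 := by
          intro h
          have hmem : i1 ∈ Z := Finset.mem_filter.mpr ⟨Finset.mem_univ _, h⟩
          have := Z.le_max' i1 hmem
          rw [← hj0] at this
          have h2 : (j0 : ℕ) + 1 ≤ (j0 : ℕ) := this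
          omega
        have hai1 : a < y i1 := by
          have hle1 : a ≤ y i1 := csInf_le hbddT hi1pos
          rcases lt_or_eq_of_le hle1 with h | h
          · exact h
          · exfalso; apply hi1pos; rw [← h]; exact h0a
        refine ⟨(y i1 - a) / 2, by linarith, ?_, ?_⟩
        · intro i hi
          have hle2 : y i1 ≤ y i := hy.monotone (show i1 ≤ i by
            have h1 : (j0 : ℕ) < (i : ℕ) := hi
            simp only [Fin.le_def, hi1]
            omega)
          linarith
        · apply hposa
          linarith
    obtain ⟨s, hs0, hsc, himp⟩ := improve hint hk0 y j0 hc h0a hposac hlej0 hgec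
    set y2 := Function.update y j0 (a + s) with hy2
    have hy2j0 : y2 j0 = a + s := Function.update_self _ _ _
    have hy2ne : ∀ i, i ≠ j0 → y2 i = y i := fun i hi => Function.update_of_ne hi _ _
    have hy2mono : Monotone y2 := by
      intro i i' hii
      by_cases h1 : i = j0 <;> by_cases h2 : i' = j0
      · rw [h1, h2]
      · rw [h1, hy2j0, hy2ne i' h2]
        have hlt : j0 < i' := lt_of_le_of_ne (h1 ▸ hii) (Ne.symm h2)
        have := hgec i' hlt
        linarith
      · rw [h2, hy2j0, hy2ne i h1]
        have hle2 : i ≤ j0 := h2 ▸ hii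
        have := hlej0 i hle2
        linarith
      · rw [hy2ne i h1, hy2ne i' h2]
        exact hy.monotone hii
    have hc1 : ∫ x, dmin y x ∂μ ≤ W1 μ νstar := integral_dmin_le_W1 hint hk0 y hνsupp
    have hc2 : projDist k μ ≤ W1 μ (μ.map (nearPt y2 hk0)) :=
      projDist_le (map_nearPt_mem_Pk y2 hk0)
    have hc3 := W1_map_nearPt_le (μ := μ) hy2mono hk0
    rw [hopt] at hc1
    linarith [himp]
  -- quantiles
  set q : Fin k → ℝ := fun j => mquantile μ (mcdf μ (y j)) with hqdef
  have hqmono : Monotone q := fun i j hij => quantile_mono (hstepA i) (hy.monotone hij)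
  have hqle : ∀ j, q j ≤ y j := fun j => (quantile_le_and_gap (hstepA j)).1
  have hgap : ∀ j, μ (Set.Ioc (q j) (y j)) = 0 := fun j => (quantile_le_and_gap (hstepA j)).2
  -- interior of S
  have hconv : Convex ℝ S := convex_iff_ordConnected.mpr hSord
  have hfront : μ (S \ interior S) = 0 := by
    rw [← hSclosed.frontier_eq]
    exact hnull _ isClosed_frontier.measurableSet (hconv.addHaar_frontier volume)
  have hintc : μ ((interior S)ᶜ) = 0 := by
    have hsub : (interior S)ᶜ ⊆ Sᶜ ∪ (S \ interior S) := by
      intro x hx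
      by_cases hxS : x ∈ S
      · exact Or.inr ⟨hxS, hx⟩
      · exact Or.inl hxS
    exact measure_mono_null hsub (measure_union_null hScompl hfront)
  have haeint : ∀ᵐ x ∂μ, x ∈ interior S := by
    rw [ae_iff]
    exact hintc
  -- the gaps avoid the interior of S
  have hgapint : ∀ j, Set.Ioo (q j) (y j) ∩ interior S = ∅ := by
    intro j
    by_contra hne
    rw [← Ne, ← Set.nonempty_iff_ne_empty] at hne
    obtain ⟨p, hp1, hp2⟩ := hne
    have hpS : p ∈ S := interior_subset hp2
    have hcont : ContinuousAt ρ p := (hρdiff.continuousOn p hpS).continuousAt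
      (mem_of_superset (isOpen_interior.mem_nhds hp2) interior_subset)
    have hρp : 0 < ρ p := hρpos p hp2
    have hev : ρ ⁻¹' Set.Ioi (ρ p / 2) ∈ 𝓝 p :=
      hcont (Ioi_mem_nhds (by linarith))
    have hU : (Set.Ioo (q j) (y j) ∩ interior S) ∩ ρ ⁻¹' Set.Ioi (ρ p / 2) ∈ 𝓝 p :=
      Filter.inter_mem (Filter.inter_mem ((isOpen_Ioo).mem_nhds hp1)
        (isOpen_interior.mem_nhds hp2)) hev
    obtain ⟨ε, hε, hball⟩ := Metric.mem_nhds_iff.mp hU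
    have hIoo : Set.Ioo (p - ε) (p + ε) ⊆
        (Set.Ioo (q j) (y j) ∩ interior S) ∩ ρ ⁻¹' Set.Ioi (ρ p / 2) := by
      rw [← Real.ball_eq_Ioo]
      exact hball
    have hμIoo : μ (Set.Ioo (p - ε) (p + ε)) = 0 :=
      measure_mono_null (fun x hx => Set.Ioo_subset_Ioc_self ((hIoo hx).1.1)) (hgap j)
    apply absurd hμIoo
    rw [hμd, withDensity_apply _ measurableSet_Ioo]
    intro hzero
    have hge : ENNReal.ofReal (ρ p / 2) * volume (Set.Ioo (p - ε) (p + ε)) ≤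
        ∫⁻ x in Set.Ioo (p - ε) (p + ε), ENNReal.ofReal (ρ x) ∂volume := by
      rw [← setLIntegral_const]
      apply lintegral_mono_ae
      rw [ae_restrict_iff' measurableSet_Ioo]
      filter_upwards with x hx
      exact ENNReal.ofReal_le_ofReal (le_of_lt (hIoo hx).2)
    rw [hzero] at hge
    have h5 : ENNReal.ofReal (ρ p / 2) * volume (Set.Ioo (p - ε) (p + ε)) = 0 :=
      le_antisymm hge (by positivity)
    rcases mul_eq_zero.mp h5 with h6 | h6
    · rw [ENNReal.ofReal_eq_zero] at h6
      linarith
    · rw [Real.volume_Ioo, ENNReal.ofReal_eq_zero] at h6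
      linarith
  -- a witness to the left of each atom inside the interior
  have hwit : ∀ j, ∃ w ∈ interior S, w < y j := by
    intro j
    have h1 : μ (Set.Iio (y j)) ≠ 0 := by
      intro h
      apply hstepA j
      rw [← Set.Iio_union_right]
      exact measure_union_null h (hsing _)
    have h2 : μ (Set.Iio (y j) ∩ interior S) ≠ 0 := by
      intro h
      apply h1
      have hsub : Set.Iio (y j) ⊆ (Set.Iio (y j) ∩ interior S) ∪ (interior S)ᶜ := by
        intro x hx
        by_cases hxi : x ∈ interior S
        · exact Or.inl ⟨hx, hxi⟩
        · exact Or.inr hxi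
      exact measure_mono_null hsub (measure_union_null h hintc)
    obtain ⟨w, hw1, hw2⟩ := nonempty_of_measure_ne_zero h2
    exact ⟨w, hw2, hw1⟩
  -- pointwise a.e. comparison
  have haegap : ∀ᵐ x ∂μ, ∀ j : Fin k, x ∉ Set.Ioc (q j) (y j) := by
    rw [ae_all_iff]
    intro j
    rw [ae_iff]
    have heq : {x : ℝ | ¬ x ∉ Set.Ioc (q j) (y j)} = Set.Ioc (q j) (y j) := by
      ext x; simp
    rw [heq]
    exact hgap j
  have hptwise : ∀ᵐ x ∂μ, dmin q x ≤ dmin y x := by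
    filter_upwards [haeint, haegap] with x hxint hxgap
    obtain ⟨j, hj, hjmin⟩ := dmin_exists hk0 y x
    rw [hj]
    rcases le_or_gt x (q j) with hxq | hxq
    · have hxy : x ≤ y j := le_trans hxq (hqle j)
      calc dmin q x ≤ |x - q j| := dmin_le _ _ _
      _ = q j - x := by rw [abs_of_nonpos (by linarith)]; ring
      _ ≤ y j - x := by linarith [hqle j]
      _ = |x - y j| := by rw [abs_of_nonpos (by linarith)]; ring
    · have hxy : y j < x := by
        by_contra hcon
        push_neg at hcon
        exact hxgap j ⟨hxq, hcon⟩
      by_cases hqy : q j = y j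
      · calc dmin q x ≤ |x - q j| := dmin_le _ _ _
        _ = |x - y j| := by rw [hqy]
      · exfalso
        have hqylt : q j < y j := lt_of_le_of_ne (hqle j) hqy
        obtain ⟨w, hwint, hwlt⟩ := hwit j
        set p := (max (q j) w + y j) / 2 with hp
        have hmaxlt : max (q j) w < y j := max_lt hqylt hwlt
        have hp1 : q j < p := by
          have h1 : max (q j) w < p := by rw [hp]; linarith
          linarith [le_max_left (q j) w]
        have hp2 : p < y j := by rw [hp]; linarith
        have hpint : p ∈ interior S := by
          have hss : Set.Icc w x ⊆ interior S :=
            (convex_iff_ordConnected.mp hconv.interior).out hwint hxint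
          apply hss
          constructor
          · have := le_max_right (q j) w
            rw [hp]; linarith
          · linarith
        have hmem : p ∈ Set.Ioo (q j) (y j) ∩ interior S := ⟨⟨hp1, hp2⟩, hpint⟩
        rw [hgapint j] at hmem
        exact hmem
  have hDint : ∫ x, dmin q x ∂μ ≤ ∫ x, dmin y x ∂μ :=
    integral_mono_ae (dmin_integrable hint hk0 q) (dmin_integrable hint hk0 y) hptwise
  -- conclusion
  have hnuQ : nuQ μ (fun j => mcdf μ (y j)) = μ.map (nearPt q hk0) := nuQ_eq_map hk0 hqmono
  have hup : W1 μ (nuQ μ (fun j => mcdf μ (y j))) ≤ W1 μ νstar := by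
    rw [hnuQ]
    calc W1 μ (μ.map (nearPt q hk0)) ≤ ∫ x, dmin q x ∂μ := W1_map_nearPt_le hqmono hk0
    _ ≤ ∫ x, dmin y x ∂μ := hDint
    _ ≤ W1 μ νstar := integral_dmin_le_W1 hint hk0 y hνsupp
  have hlo : W1 μ νstar ≤ W1 μ (nuQ μ (fun j => mcdf μ (y j))) := by
    rw [hopt, hnuQ]
    exact projDist_le (map_nearPt_mem_Pk q hk0)
  exact ⟨le_antisymm hup hlo, hopt⟩
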